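/- There exists a unique m₀ ∈ (0,1) such that 2E(m₀) − K(m₀) = 0, and moreover m₀ > 1/2. -/

import Mathlib

/-!
With `φ x = 2√x − 1/√x`, which is increasing on `(0, ∞)`, one has
`2E(m) − K(m) = ∫₀^{π/2} φ(1 − m sin² θ) dθ`, so `2E − K` is continuous and strictly decreasing
on `m < 1`. It is positive at `m = 1/2` since `φ(1/2) = 0`, and negative at `m = 1 − 1/32²`,
where `E ≤ π/2` while `K ≥ log(1 + 16π) > π`. The intermediate value theorem gives a root in
`[1/2, 1 − 1/32²]`, and strict monotonicity gives its uniqueness and the bound `m₀ > 1/2`.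
-/

open Real

noncomputable def ellK (m : ℝ) : ℝ :=
  ∫ θ in (0:ℝ)..(π / 2), 1 / Real.sqrt (1 - m * Real.sin θ ^ 2)

noncomputable def ellE (m : ℝ) : ℝ :=
  ∫ θ in (0:ℝ)..(π / 2), Real.sqrt (1 - m * Real.sin θ ^ 2)

open Set intervalIntegral

lemma one_sub_mul_sin_sq_pos {m : ℝ} (hm : m < 1) (θ : ℝ) : 0 < 1 - m * sin θ ^ 2 := by
  rcases le_total m 0 with h | h
  · nlinarith [sq_nonneg (sin θ)]
  · nlinarith [sin_sq_le_one θ]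

noncomputable def twoSqrtSubInvSqrt (x : ℝ) : ℝ := 2 * √x - 1 / √x

lemma strictMonoOn_twoSqrtSubInvSqrt : StrictMonoOn twoSqrtSubInvSqrt (Ioi 0) := by
  intro x hx y _ hxy
  have hsx : 0 < √x := sqrt_pos.2 hx
  have hsxy : √x < √y := sqrt_lt_sqrt (le_of_lt hx) hxy
  have hinv : 1 / √y < 1 / √x := one_div_lt_one_div_of_lt hsx hsxy
  unfold twoSqrtSubInvSqrt
  linarith

lemma twoSqrtSubInvSqrt_half : twoSqrtSubInvSqrt (1 / 2) = 0 := by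
  have hs : √(1 / 2 : ℝ) ^ 2 = 1 / 2 := sq_sqrt (by norm_num)
  have hpos : 0 < √(1 / 2 : ℝ) := sqrt_pos.2 (by norm_num)
  unfold twoSqrtSubInvSqrt
  field_simp
  linarith

lemma continuousOn_twoSqrtSubInvSqrt : ContinuousOn twoSqrtSubInvSqrt (Ioi 0) :=
  (continuousOn_const.mul continuous_sqrt.continuousOn).sub
    (continuousOn_const.div continuous_sqrt.continuousOn fun _ hx => (sqrt_pos.2 hx).ne')

lemma continuous_twoSqrtSubInvSqrt_one_sub_mul_sin_sq {m : ℝ} (hm : m < 1) :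
    Continuous fun θ => twoSqrtSubInvSqrt (1 - m * sin θ ^ 2) :=
  continuousOn_twoSqrtSubInvSqrt.comp_continuous (by fun_prop) (one_sub_mul_sin_sq_pos hm)

lemma two_mul_ellE_sub_ellK_eq_integral {m : ℝ} (hm : m < 1) :
    2 * ellE m - ellK m = ∫ θ in (0:ℝ)..(π / 2), twoSqrtSubInvSqrt (1 - m * sin θ ^ 2) := by
  have hK : Continuous fun θ => 1 / √(1 - m * sin θ ^ 2) :=
    continuous_const.div (by fun_prop) fun θ => (sqrt_pos.2 (one_sub_mul_sin_sq_pos hm θ)).ne'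
  have hE : Continuous fun θ => 2 * √(1 - m * sin θ ^ 2) := by fun_prop
  rw [ellE, ellK, ← integral_const_mul, ← integral_sub (hE.intervalIntegrable _ _)
    (hK.intervalIntegrable _ _)]
  rfl

lemma strictAntiOn_two_mul_ellE_sub_ellK :
    StrictAntiOn (fun m => 2 * ellE m - ellK m) (Iio 1) := by
  intro m₁ hm₁ m₂ hm₂ h12
  have hle : ∀ θ, twoSqrtSubInvSqrt (1 - m₂ * sin θ ^ 2) ≤ twoSqrtSubInvSqrt (1 - m₁ * sin θ ^ 2) :=
    fun θ => strictMonoOn_twoSqrtSubInvSqrt.monotoneOn (one_sub_mul_sin_sq_pos hm₂ θ)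
      (one_sub_mul_sin_sq_pos hm₁ θ) (by nlinarith [sq_nonneg (sin θ)])
  have hlt : twoSqrtSubInvSqrt (1 - m₂ * sin (π / 2) ^ 2)
      < twoSqrtSubInvSqrt (1 - m₁ * sin (π / 2) ^ 2) := by
    refine strictMonoOn_twoSqrtSubInvSqrt (one_sub_mul_sin_sq_pos hm₂ _)
      (one_sub_mul_sin_sq_pos hm₁ _) ?_
    simp only [sin_pi_div_two]
    linarith
  simp only [two_mul_ellE_sub_ellK_eq_integral hm₁, two_mul_ellE_sub_ellK_eq_integral hm₂]
  exact integral_lt_integral_of_continuousOn_of_le_of_exists_lt (by positivity)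
    (continuous_twoSqrtSubInvSqrt_one_sub_mul_sin_sq hm₂).continuousOn
    (continuous_twoSqrtSubInvSqrt_one_sub_mul_sin_sq hm₁).continuousOn (fun θ _ => hle θ)
    ⟨π / 2, right_mem_Icc.2 (by positivity), hlt⟩

lemma continuousOn_two_mul_ellE_sub_ellK :
    ContinuousOn (fun m => 2 * ellE m - ellK m) (Iio 1) := by
  rw [continuousOn_iff_continuous_domRestrict]
  have hrestrict : (Iio 1).domRestrict (fun m => 2 * ellE m - ellK m) = fun m : Iio (1 : ℝ) =>
      ∫ θ in (0:ℝ)..(π / 2), twoSqrtSubInvSqrt (1 - m.1 * sin θ ^ 2) :=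
    funext fun m => two_mul_ellE_sub_ellK_eq_integral m.2
  have hcont : Continuous fun p : Iio (1 : ℝ) × ℝ => twoSqrtSubInvSqrt (1 - p.1.1 * sin p.2 ^ 2) :=
    continuousOn_twoSqrtSubInvSqrt.comp_continuous (by fun_prop)
      fun p => one_sub_mul_sin_sq_pos p.1.2 p.2
  rw [hrestrict]
  exact continuous_parametric_intervalIntegral_of_continuous' hcont _ _

lemma two_mul_ellE_half_sub_ellK_half_pos : 0 < 2 * ellE (1 / 2) - ellK (1 / 2) := by
  rw [two_mul_ellE_sub_ellK_eq_integral (by norm_num)]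
  refine intervalIntegral_pos_of_pos_on
    ((continuous_twoSqrtSubInvSqrt_one_sub_mul_sin_sq (by norm_num)).intervalIntegrable _ _)
    (fun θ hθ => ?_) (by positivity)
  have hcos : 0 < cos θ := cos_pos_of_mem_Ioo ⟨by linarith [hθ.1, pi_pos], hθ.2⟩
  rw [← twoSqrtSubInvSqrt_half]
  exact strictMonoOn_twoSqrtSubInvSqrt (by norm_num : (1 / 2 : ℝ) ∈ Ioi 0)
    (one_sub_mul_sin_sq_pos (by norm_num) θ) (by nlinarith [sin_sq_add_cos_sq θ])

lemma ellE_le_pi_div_two {m : ℝ} (hm : 0 ≤ m) : ellE m ≤ π / 2 := by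
  have h : ellE m ≤ ∫ _ in (0:ℝ)..(π / 2), (1 : ℝ) :=
    integral_mono_on (by positivity) ((by fun_prop : Continuous fun θ =>
      √(1 - m * sin θ ^ 2)).intervalIntegrable _ _) intervalIntegrable_const
      fun θ _ => sqrt_le_one.2 (by nlinarith [sq_nonneg (sin θ)])
  simpa using h

/-- On `[0, π/2]` the integrand of `K(1 - ε²)` dominates `1 / (π/2 + ε - θ)`, because
`1 - (1 - ε²) sin² θ = cos² θ + ε² sin² θ ≤ (cos θ + ε)²` and `cos θ ≤ π/2 - θ`. -/
lemma log_one_add_pi_div_le_ellK {ε : ℝ} (hε : 0 < ε) :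
    log (1 + π / (2 * ε)) ≤ ellK (1 - ε ^ 2) := by
  have hm : 1 - ε ^ 2 < 1 := by nlinarith
  have hint : ∫ θ in (0:ℝ)..(π / 2), 1 / (π / 2 + ε - θ) = log (1 + π / (2 * ε)) := by
    rw [integral_comp_sub_left (fun x => 1 / x), integral_one_div_of_pos (by linarith)
      (by linarith [pi_pos])]
    congr 1
    field_simp
    ring
  rw [← hint, ellK]
  refine integral_mono_on (by positivity) ?_ ?_ fun θ hθ => ?_
  · exact ContinuousOn.intervalIntegrable_of_Icc (by positivity)
      (continuousOn_const.div (by fun_prop) fun θ hθ => by linarith [hθ.2])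
  · exact (continuous_const.div (by fun_prop) fun θ =>
      (sqrt_pos.2 (one_sub_mul_sin_sq_pos hm θ)).ne').intervalIntegrable _ _
  have hcos0 : 0 ≤ cos θ := cos_nonneg_of_mem_Icc ⟨by linarith [hθ.1, pi_pos], hθ.2⟩
  have hcos : cos θ ≤ π / 2 - θ := by
    simpa [sin_pi_div_two_sub] using sin_le (by linarith [hθ.2] : 0 ≤ π / 2 - θ)
  have hsqrt : √(1 - (1 - ε ^ 2) * sin θ ^ 2) ≤ π / 2 + ε - θ := by
    rw [sqrt_le_left (by linarith)]
    nlinarith [sin_sq_add_cos_sq θ, sin_sq_le_one θ]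
  exact one_div_le_one_div_of_le (sqrt_pos.2 (one_sub_mul_sin_sq_pos hm θ)) hsqrt

lemma pi_lt_log_one_add_sixteen_mul_pi : π < log (1 + 16 * π) :=
  calc π < 5 * 0.6931471803 := by linarith [pi_lt_d2]
    _ < 5 * log 2 := by linarith [log_two_gt_d9]
    _ = log 32 := by rw [← log_rpow two_pos]; norm_num
    _ < log (1 + 16 * π) := log_lt_log (by norm_num) (by linarith [pi_gt_three])

lemma two_mul_ellE_sub_ellK_neg :
    2 * ellE (1 - (1 / 32) ^ 2) - ellK (1 - (1 / 32) ^ 2) < 0 := by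
  have hE := ellE_le_pi_div_two (m := 1 - (1 / 32) ^ 2) (by norm_num)
  have hK := log_one_add_pi_div_le_ellK (ε := 1 / 32) (by norm_num)
  rw [show π / (2 * (1 / 32)) = 16 * π by ring] at hK
  linarith [pi_lt_log_one_add_sixteen_mul_pi]

theorem figure_eight_parameter :
    (∃! m : ℝ, m ∈ Set.Ioo (0:ℝ) 1 ∧ 2 * ellE m - ellK m = 0) ∧
    (∀ m ∈ Set.Ioo (0:ℝ) 1, 2 * ellE m - ellK m = 0 → 1 / 2 < m) := by
  have hanti := strictAntiOn_two_mul_ellE_sub_ellK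
  have hhalf := two_mul_ellE_half_sub_ellK_half_pos
  obtain ⟨m₀, hm₀, hroot⟩ : ∃ m ∈ Icc (1 / 2 : ℝ) (1 - (1 / 32) ^ 2), 2 * ellE m - ellK m = 0 :=
    intermediate_value_Icc' (by norm_num)
      (continuousOn_two_mul_ellE_sub_ellK.mono fun _ hm => mem_Iio.2 (hm.2.trans_lt (by norm_num)))
      ⟨two_mul_ellE_sub_ellK_neg.le, hhalf.le⟩
  have hm₀1 : m₀ < 1 := by linarith [hm₀.2]
  refine ⟨⟨m₀, ⟨⟨by linarith [hm₀.1], hm₀1⟩, hroot⟩, fun m hm =>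
    hanti.injOn hm.1.2 hm₀1 (hm.2.trans hroot.symm)⟩, fun m hm hroot' => ?_⟩
  by_contra! hle
  have hle_half := hanti.antitoneOn hm.2 (by norm_num : (1 / 2 : ℝ) < 1) hle
  linarith
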